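/- arXiv:2509.02370 — 2 statements merged into one kernel-verified Lean document; each statement's English description precedes it below -/
import Mathlib

section
/- For every binary vector x ∈ {0,1}^n the Lagrangian dual attains strong duality: φ(x) = inf_{λ ∈ ℝ^n} L_ℓ(x,λ), and there exists λ*(x) ∈ ℝ^n such that for every λ ∈ ℝ^n satisfying λ_i ≥ λ*_i(x) whenever x_i = 1 and λ_i ≤ λ*_i(x) whenever x_i = 0, one has L_ℓ(x,λ) = φ(x). -/
open Finset

noncomputable section

/-- A vector is binary if each coordinate is 0 or 1. -/
def IsBin {n : ℕ} (x : Fin n → ℝ) : Prop := ∀ i, x i = 0 ∨ x i = 1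

/-- Multilinear extension of `φ` from `{0,1}^n` to `ℝ^n`. -/
def psi {n : ℕ} (φ : (Fin n → ℝ) → ℝ) (z : Fin n → ℝ) : ℝ :=
  ∑ v : Fin n → Bool,
    φ (fun i => if v i then (1 : ℝ) else 0) * ∏ i, (if v i then z i else 1 - z i)

/-- Penalty term `p(x,z) = Σ x_i + Σ z_i - 2 Σ x_i z_i`. -/
def pen {n : ℕ} (x z : Fin n → ℝ) : ℝ :=
  (∑ i, x i) + (∑ i, z i) - 2 * ∑ i, x i * z i

/-- Lagrangian `L_ℓ(x,λ) = sup_{z ∈ [0,1]^n} [ψ(z) - λᵀ(x - z)]`. -/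
def Ll {n : ℕ} (φ : (Fin n → ℝ) → ℝ) (x lam : Fin n → ℝ) : ℝ :=
  sSup ((fun z => psi φ z - ∑ i, lam i * (x i - z i)) '' Set.Icc (0 : Fin n → ℝ) 1)

lemma abs_prod_sub_prod {ι : Type*} (s : Finset ι) (a b : ι → ℝ)
    (ha : ∀ i, |a i| ≤ 1) (hb : ∀ i, |b i| ≤ 1) :
    |∏ i ∈ s, a i - ∏ i ∈ s, b i| ≤ ∑ i ∈ s, |a i - b i| := by
  induction s using Finset.cons_induction with
  | empty => simp
  | cons j s hj ih =>
    rw [Finset.prod_cons, Finset.prod_cons, Finset.sum_cons]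
    have key : a j * ∏ i ∈ s, a i - b j * ∏ i ∈ s, b i
        = a j * (∏ i ∈ s, a i - ∏ i ∈ s, b i) + (a j - b j) * ∏ i ∈ s, b i := by ring
    rw [key]
    have h1 : |a j * (∏ i ∈ s, a i - ∏ i ∈ s, b i)| ≤ ∑ i ∈ s, |a i - b i| := by
      rw [abs_mul]
      calc |a j| * |∏ i ∈ s, a i - ∏ i ∈ s, b i| ≤ 1 * (∑ i ∈ s, |a i - b i|) := by
            apply mul_le_mul (ha j) ih (abs_nonneg _) zero_le_one
        _ = ∑ i ∈ s, |a i - b i| := one_mul _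
    have h2 : |(a j - b j) * ∏ i ∈ s, b i| ≤ |a j - b j| := by
      rw [abs_mul]
      have : |∏ i ∈ s, b i| ≤ 1 := by
        rw [abs_prod]
        exact Finset.prod_le_one (fun i _ => abs_nonneg _) (fun i _ => hb i)
      calc |a j - b j| * |∏ i ∈ s, b i| ≤ |a j - b j| * 1 :=
            mul_le_mul_of_nonneg_left this (abs_nonneg _)
        _ = |a j - b j| := mul_one _
    calc |a j * (∏ i ∈ s, a i - ∏ i ∈ s, b i) + (a j - b j) * ∏ i ∈ s, b i|
        ≤ |a j * (∏ i ∈ s, a i - ∏ i ∈ s, b i)| + |(a j - b j) * ∏ i ∈ s, b i| := abs_add_le _ _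
      _ ≤ ∑ i ∈ s, |a i - b i| + |a j - b j| := add_le_add h1 h2
      _ = |a j - b j| + ∑ i ∈ s, |a i - b i| := by ring

lemma psi_binary {n : ℕ} (φ : (Fin n → ℝ) → ℝ) (x : Fin n → ℝ) (hx : IsBin x) :
    psi φ x = φ x := by
  classical
  set b : Fin n → Bool := fun i => decide (x i = 1) with hb
  have hxb : (fun i => if b i then (1:ℝ) else 0) = x := by
    funext i
    rcases hx i with h | h
    · simp [hb, h]
    · simp [hb, h]
  rw [psi, Fintype.sum_eq_single b]
  · rw [hxb]
    have : ∏ i, (if b i then x i else 1 - x i) = 1 := by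
      apply Finset.prod_eq_one
      intro i _
      rcases hx i with h | h
      · simp [hb, h]
      · simp [hb, h]
    rw [this, mul_one]
  · intro v hv
    have : ∃ i, v i ≠ b i := by
      by_contra h
      push_neg at h
      exact hv (funext h)
    obtain ⟨i, hi⟩ := this
    have : (if v i then x i else 1 - x i) = 0 := by
      rcases hx i with h | h
      · have hbi : b i = false := by simp [hb, h]
        rw [hbi] at hi
        have : v i = true := by simpa using hi
        simp [this, h]
      · have hbi : b i = true := by simp [hb, h]
        rw [hbi] at hi
        have : v i = false := by simpa using hi
        simp [this, h]
    rw [Finset.prod_eq_zero (Finset.mem_univ i) this, mul_zero]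

/-- The Lipschitz constant. -/
def Cphi {n : ℕ} (φ : (Fin n → ℝ) → ℝ) : ℝ :=
  ∑ v : Fin n → Bool, |φ (fun i => if v i then (1 : ℝ) else 0)|

lemma Cphi_nonneg {n : ℕ} (φ : (Fin n → ℝ) → ℝ) : 0 ≤ Cphi φ :=
  Finset.sum_nonneg fun _ _ => abs_nonneg _

lemma psi_lipschitz {n : ℕ} (φ : (Fin n → ℝ) → ℝ) (z w : Fin n → ℝ)
    (hz : z ∈ Set.Icc (0 : Fin n → ℝ) 1) (hw : w ∈ Set.Icc (0 : Fin n → ℝ) 1) :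
    |psi φ z - psi φ w| ≤ Cphi φ * ∑ i, |z i - w i| := by
  have hz0 : ∀ i, (0:ℝ) ≤ z i := fun i => by simpa using hz.1 i
  have hz1 : ∀ i, z i ≤ 1 := fun i => by simpa using hz.2 i
  have hw0 : ∀ i, (0:ℝ) ≤ w i := fun i => by simpa using hw.1 i
  have hw1 : ∀ i, w i ≤ 1 := fun i => by simpa using hw.2 i
  rw [psi, psi, ← Finset.sum_sub_distrib]
  calc |∑ v : Fin n → Bool, (φ (fun i => if v i then (1:ℝ) else 0) * ∏ i, (if v i then z i else 1 - z i)
          - φ (fun i => if v i then (1:ℝ) else 0) * ∏ i, (if v i then w i else 1 - w i))|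
      ≤ ∑ v : Fin n → Bool, |φ (fun i => if v i then (1:ℝ) else 0) * ∏ i, (if v i then z i else 1 - z i)
          - φ (fun i => if v i then (1:ℝ) else 0) * ∏ i, (if v i then w i else 1 - w i)| :=
        Finset.abs_sum_le_sum_abs _ _
    _ ≤ ∑ v : Fin n → Bool, |φ (fun i => if v i then (1:ℝ) else 0)| * ∑ i, |z i - w i| := by
        apply Finset.sum_le_sum
        intro v _
        rw [← mul_sub, abs_mul]
        apply mul_le_mul_of_nonneg_left _ (abs_nonneg _)
        have := abs_prod_sub_prod Finset.univ (fun i => if v i then z i else 1 - z i)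
          (fun i => if v i then w i else 1 - w i) ?_ ?_
        · refine this.trans (le_of_eq ?_)
          apply Finset.sum_congr rfl
          intro i _
          by_cases h : v i
          · simp [h]
          · simp only [if_neg h]
            rw [show (1 - z i) - (1 - w i) = -(z i - w i) by ring, abs_neg]
        · intro i
          by_cases h : v i
          · simp only [if_pos h]
            rw [abs_le]; exact ⟨by linarith [hz0 i], hz1 i⟩
          · simp only [if_neg h]
            rw [abs_le]; exact ⟨by linarith [hz1 i], by linarith [hz0 i]⟩
        · intro i
          by_cases h : v i
          · simp only [if_pos h]
            rw [abs_le]; exact ⟨by linarith [hw0 i], hw1 i⟩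
          · simp only [if_neg h]
            rw [abs_le]; exact ⟨by linarith [hw1 i], by linarith [hw0 i]⟩
    _ = Cphi φ * ∑ i, |z i - w i| := by rw [← Finset.sum_mul, Cphi]

lemma psi_bound {n : ℕ} (φ : (Fin n → ℝ) → ℝ) (z : Fin n → ℝ)
    (hz : z ∈ Set.Icc (0 : Fin n → ℝ) 1) : |psi φ z| ≤ Cphi φ := by
  rw [psi]
  calc |∑ v : Fin n → Bool, φ (fun i => if v i then (1:ℝ) else 0) * ∏ i, (if v i then z i else 1 - z i)|
      ≤ ∑ v : Fin n → Bool, |φ (fun i => if v i then (1:ℝ) else 0) * ∏ i, (if v i then z i else 1 - z i)| :=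
        Finset.abs_sum_le_sum_abs _ _
    _ ≤ Cphi φ := by
        apply Finset.sum_le_sum
        intro v _
        rw [abs_mul]
        have : |∏ i, (if v i then z i else 1 - z i)| ≤ 1 := by
          rw [abs_prod]
          apply Finset.prod_le_one (fun i _ => abs_nonneg _)
          intro i _
          have h0 : (0:ℝ) ≤ z i := by simpa using hz.1 i
          have h1 : z i ≤ 1 := by simpa using hz.2 i
          by_cases h : v i
          · simp only [if_pos h]
            rw [abs_le]; exact ⟨by linarith, h1⟩
          · simp only [if_neg h]
            rw [abs_le]; exact ⟨by linarith, by linarith⟩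
        calc |φ (fun i => if v i then (1:ℝ) else 0)| * |∏ i, (if v i then z i else 1 - z i)|
            ≤ |φ (fun i => if v i then (1:ℝ) else 0)| * 1 :=
              mul_le_mul_of_nonneg_left this (abs_nonneg _)
          _ = _ := mul_one _

lemma x_mem_Icc {n : ℕ} (x : Fin n → ℝ) (hx : IsBin x) :
    x ∈ Set.Icc (0 : Fin n → ℝ) 1 := by
  constructor <;> intro i <;> rcases hx i with h | h <;> simp [h]

/-- strong duality of the Lagrangian dual at every binary `x`. -/
theorem lagrangian_strong_duality (n : ℕ) (hn : 0 < n)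
    (φ : (Fin n → ℝ) → ℝ) (x : Fin n → ℝ) (hx : IsBin x) :
    φ x = sInf (Set.range fun lam : Fin n → ℝ => Ll φ x lam) ∧
    ∃ lamstar : Fin n → ℝ, ∀ lam : Fin n → ℝ,
      (∀ i, (x i = 1 → lamstar i ≤ lam i) ∧ (x i = 0 → lam i ≤ lamstar i)) →
      Ll φ x lam = φ x := by
  have hxI := x_mem_Icc x hx
  have hpsix := psi_binary φ x hx
  set C := Cphi φ with hC
  have hC0 := Cphi_nonneg φ
  -- membership: φ x is in the image set for any lam
  have hmem : ∀ lam : Fin n → ℝ,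
      φ x ∈ (fun z => psi φ z - ∑ i, lam i * (x i - z i)) '' Set.Icc (0 : Fin n → ℝ) 1 := by
    intro lam
    refine ⟨x, hxI, ?_⟩
    simp [hpsix]
  -- each image set is bounded above
  have hbdd : ∀ lam : Fin n → ℝ,
      BddAbove ((fun z => psi φ z - ∑ i, lam i * (x i - z i)) '' Set.Icc (0 : Fin n → ℝ) 1) := by
    intro lam
    refine ⟨C + ∑ i, |lam i|, ?_⟩
    rintro _ ⟨z, hz, rfl⟩
    dsimp only
    have h1 : psi φ z ≤ C := (abs_le.mp (psi_bound φ z hz)).2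
    have h2 : -(∑ i, lam i * (x i - z i)) ≤ ∑ i, |lam i| := by
      have : |∑ i, lam i * (x i - z i)| ≤ ∑ i, |lam i| := by
        calc |∑ i, lam i * (x i - z i)| ≤ ∑ i, |lam i * (x i - z i)| :=
              Finset.abs_sum_le_sum_abs _ _
          _ ≤ ∑ i, |lam i| := by
              apply Finset.sum_le_sum
              intro i _
              rw [abs_mul]
              have h0 : (0:ℝ) ≤ z i := by simpa using hz.1 i
              have h1 : z i ≤ 1 := by simpa using hz.2 i
              have : |x i - z i| ≤ 1 := by
                rw [abs_le]
                rcases hx i with h | h <;> rw [h] <;> constructor <;> linarith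
              calc |lam i| * |x i - z i| ≤ |lam i| * 1 :=
                    mul_le_mul_of_nonneg_left this (abs_nonneg _)
                _ = |lam i| := mul_one _
      linarith [(abs_le.mp this).1]
    linarith
  -- lower bound for Ll: φ x ≤ Ll φ x lam for all lam
  have hlow : ∀ lam : Fin n → ℝ, φ x ≤ Ll φ x lam := fun lam =>
    le_csSup (hbdd lam) (hmem lam)
  -- the magic multiplier
  set lamstar : Fin n → ℝ := fun i => C * (2 * x i - 1) with hls
  -- equality for admissible lam
  have heq : ∀ lam : Fin n → ℝ,
      (∀ i, (x i = 1 → lamstar i ≤ lam i) ∧ (x i = 0 → lam i ≤ lamstar i)) →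
      Ll φ x lam = φ x := by
    intro lam hlam
    refine le_antisymm ?_ (hlow lam)
    apply csSup_le ⟨_, hmem lam⟩
    rintro _ ⟨z, hz, rfl⟩
    dsimp only
    -- need: psi φ z - Σ lam i (x i - z i) ≤ φ x
    have key : C * ∑ i, |x i - z i| ≤ ∑ i, lam i * (x i - z i) := by
      rw [Finset.mul_sum]
      apply Finset.sum_le_sum
      intro i _
      rcases hx i with h | h
      · -- x i = 0 : |x i - z i| = z i, x i - z i = - z i ≤ 0, lam i ≤ lamstar i = -C
        have hli := (hlam i).2 h
        have hlsi : lamstar i = -C := by simp [hls, h]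
        have h0 : (0:ℝ) ≤ z i := by simpa using hz.1 i
        have habs : |x i - z i| = z i := by
          rw [h, zero_sub, abs_neg, abs_of_nonneg h0]
        rw [habs, h, zero_sub]
        rw [hlsi] at hli
        nlinarith
      · have hli := (hlam i).1 h
        have hlsi : lamstar i = C := by simp [hls, h]; norm_num
        have h1 : z i ≤ 1 := by simpa using hz.2 i
        have habs : |x i - z i| = 1 - z i := by
          rw [h, abs_of_nonneg (by linarith)]
        rw [habs, h]
        rw [hlsi] at hli
        nlinarith
    have hlip : psi φ z - φ x ≤ C * ∑ i, |x i - z i| := by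
      have := (abs_le.mp (psi_lipschitz φ z x hz hxI)).2
      rw [hpsix] at this
      calc psi φ z - φ x ≤ C * ∑ i, |z i - x i| := this
        _ = C * ∑ i, |x i - z i| := by
            congr 1
            exact Finset.sum_congr rfl fun i _ => abs_sub_comm _ _
    linarith
  refine ⟨?_, lamstar, heq⟩
  -- sInf part
  have hne : (Set.range fun lam : Fin n → ℝ => Ll φ x lam).Nonempty := Set.range_nonempty _
  apply le_antisymm
  · apply le_csInf hne
    rintro _ ⟨lam, rfl⟩
    exact hlow lam
  · have : Ll φ x lamstar = φ x := heq lamstar fun i => ⟨fun _ => le_refl _, fun _ => le_refl _⟩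
    calc sInf (Set.range fun lam : Fin n → ℝ => Ll φ x lam) ≤ Ll φ x lamstar :=
          csInf_le ⟨φ x, by rintro _ ⟨lam, rfl⟩; exact hlow lam⟩ ⟨lamstar, rfl⟩
      _ = φ x := this
end
end

section
/- There exist vectors U, L ∈ ℝ^n such that, defining λ̂(w) ∈ ℝ^n by λ̂(w)_i = U_i(1 − w_i) + L_i w_i, the Lagrangian-based inequality is valid and tight: for every z ∈ [0,1]^n and every binary x ∈ {0,1}^n one has φ(x) ≥ ψ(z) − λ̂(1−x)ᵀ(x − z); moreover, for every binary z ∈ {0,1}^n and binary x this inequality can be rewritten as φ(x) ≥ φ(z) − λ̂(z)ᵀ(x − z), and its right-hand side evaluated at x = z equals φ(z). -/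
open Finset

noncomputable section

lemma sumW {n : ℕ} (z : Fin n → ℝ) :
    ∑ v : Fin n → Bool, ∏ i, (if v i then z i else 1 - z i) = 1 := by
  classical
  rw [← Fintype.prod_sum fun (i : Fin n) (b : Bool) => if b then z i else 1 - z i]
  rw [Finset.prod_eq_one]
  intro i _
  simp

lemma weier {ι : Type*} (s : Finset ι) (a : ι → ℝ) (h0 : ∀ i, 0 ≤ a i) (h1 : ∀ i, a i ≤ 1) :
    1 - ∑ i ∈ s, a i ≤ ∏ i ∈ s, (1 - a i) := by
  classical
  induction s using Finset.cons_induction with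
  | empty => simp
  | cons j s hj ih =>
    rw [Finset.sum_cons, Finset.prod_cons]
    have hP0 : 0 ≤ ∏ i ∈ s, (1 - a i) :=
      Finset.prod_nonneg fun i _ => by linarith [h1 i]
    have hP1 : ∏ i ∈ s, (1 - a i) ≤ 1 :=
      Finset.prod_le_one (fun i _ => by linarith [h1 i]) (fun i _ => by linarith [h0 i])
    nlinarith [h0 j, h1 j]

lemma psi_bin {n : ℕ} (φ : (Fin n → ℝ) → ℝ) (z : Fin n → ℝ) (hz : IsBin z) :
    psi φ z = φ z := by
  classical
  set bz : Fin n → Bool := fun i => decide (z i = 1) with hbz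
  have hxz : (fun i => if bz i then (1:ℝ) else 0) = z := by
    funext i; rcases hz i with h | h <;> simp [hbz, h]
  rw [psi, Finset.sum_eq_single bz]
  · rw [hxz]
    have : ∏ i, (if bz i then z i else 1 - z i) = 1 :=
      Finset.prod_eq_one fun i _ => by rcases hz i with h | h <;> simp [hbz, h]
    rw [this, mul_one]
  · intro v _ hv
    have : ∃ i, v i ≠ bz i := by
      by_contra h; push_neg at h; exact hv (funext h)
    obtain ⟨i, hi⟩ := this
    have hfac : (if v i then z i else 1 - z i) = 0 := by
      rcases hz i with h | h <;> simp [hbz, h] at hi <;> simp [hi, h]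
    exact mul_eq_zero_of_right _ (Finset.prod_eq_zero (Finset.mem_univ i) hfac)
  · intro h; exact absurd (Finset.mem_univ bz) h

lemma core {n : ℕ} (φ : (Fin n → ℝ) → ℝ) (z : Fin n → ℝ)
    (hz : z ∈ Set.Icc (0 : Fin n → ℝ) 1) (x : Fin n → ℝ) (hx : IsBin x) :
    psi φ z - φ x ≤
      (2 * ∑ v : Fin n → Bool, |φ (fun i => if v i then (1:ℝ) else 0)|) *
        ∑ i, |x i - z i| := by
  classical
  set C := ∑ v : Fin n → Bool, |φ (fun i => if v i then (1:ℝ) else 0)| with hC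
  set W : (Fin n → Bool) → ℝ := fun v => ∏ i, (if v i then z i else 1 - z i) with hW
  have hz0 : ∀ i, 0 ≤ z i := fun i => hz.1 i
  have hz1 : ∀ i, z i ≤ 1 := fun i => hz.2 i
  have hsum1 : ∑ v : Fin n → Bool, W v = 1 := sumW z
  have hWnn : ∀ v, 0 ≤ W v := fun v =>
    Finset.prod_nonneg fun i _ => by
      cases hvi : v i <;> simp [hvi] <;> [linarith [hz1 i]; exact hz0 i]
  have hCnn : 0 ≤ C := Finset.sum_nonneg fun v _ => abs_nonneg _
  set bx : Fin n → Bool := fun i => decide (x i = 1) with hbx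
  have hxx : (fun i => if bx i then (1:ℝ) else 0) = x := by
    funext i; rcases hx i with h | h <;> simp [hbx, h]
  have habs : ∀ v : Fin n → Bool, |φ (fun i => if v i then (1:ℝ) else 0)| ≤ C :=
    fun v => Finset.single_le_sum (f := fun v => |φ (fun i => if v i then (1:ℝ) else 0)|)
      (fun v _ => abs_nonneg _) (Finset.mem_univ v)
  have hphix : |φ x| ≤ C := by rw [← hxx]; exact habs bx
  have habsz : ∀ i, |x i - z i| ≤ 1 := fun i => by
    rcases hx i with h | h
    · rw [h, zero_sub, abs_neg, abs_of_nonneg (hz0 i)]; exact hz1 i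
    · rw [h, abs_of_nonneg (by linarith [hz1 i])]; linarith [hz0 i]
  have h1 : psi φ z - φ x =
      ∑ v : Fin n → Bool, (φ (fun i => if v i then (1:ℝ) else 0) - φ x) * W v := by
    have e1 : ∑ v : Fin n → Bool, (φ (fun i => if v i then (1:ℝ) else 0) - φ x) * W v
        = (∑ v : Fin n → Bool, φ (fun i => if v i then (1:ℝ) else 0) * W v)
            - φ x * ∑ v : Fin n → Bool, W v := by
      rw [Finset.mul_sum, ← Finset.sum_sub_distrib]
      exact Finset.sum_congr rfl fun v _ => by ring
    rw [e1, hsum1, mul_one, psi]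
  have ht0 : (φ (fun i => if bx i then (1:ℝ) else 0) - φ x) * W bx = 0 := by
    rw [hxx, sub_self, zero_mul]
  have h2 : psi φ z - φ x =
      ∑ v ∈ Finset.univ.erase bx, (φ (fun i => if v i then (1:ℝ) else 0) - φ x) * W v := by
    rw [h1, ← Finset.add_sum_erase _ _ (Finset.mem_univ bx), ht0, zero_add]
  have h3 : ∑ v ∈ Finset.univ.erase bx, (φ (fun i => if v i then (1:ℝ) else 0) - φ x) * W v
      ≤ ∑ v ∈ Finset.univ.erase bx, (2 * C) * W v := by
    refine Finset.sum_le_sum fun v _ => ?_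
    have hb : (φ (fun i => if v i then (1:ℝ) else 0) - φ x) ≤ 2 * C := by
      have := le_abs_self (φ (fun i => if v i then (1:ℝ) else 0))
      have := neg_abs_le (φ x)
      linarith [habs v, hphix]
    exact mul_le_mul_of_nonneg_right hb (hWnn v)
  have h5 : ∑ v ∈ Finset.univ.erase bx, (2 * C) * W v = (2 * C) * (1 - W bx) := by
    rw [← Finset.mul_sum]
    congr 1
    rw [Finset.sum_erase_eq_sub (Finset.mem_univ bx), hsum1]
  have hWbx : W bx = ∏ i, (1 - |x i - z i|) := by
    refine Finset.prod_congr rfl fun i _ => ?_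
    rcases hx i with h | h
    · have e : |x i - z i| = z i := by rw [h, zero_sub, abs_neg, abs_of_nonneg (hz0 i)]
      have hb : bx i = false := by simp [hbx, h]
      rw [e, hb]; norm_num
    · have e : |x i - z i| = 1 - z i := by
        rw [h]; exact abs_of_nonneg (by linarith [hz1 i])
      have hb : bx i = true := by simp [hbx, h]
      rw [e, hb, if_pos rfl]; ring
  have h6 : 1 - W bx ≤ ∑ i, |x i - z i| := by
    have hw := weier Finset.univ (fun i => |x i - z i|) (fun i => abs_nonneg _)
      (fun i => habsz i)
    rw [hWbx]
    linarith
  calc psi φ z - φ x ≤ (2 * C) * (1 - W bx) := by rw [h2, ← h5]; exact h3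
    _ ≤ (2 * C) * ∑ i, |x i - z i| := mul_le_mul_of_nonneg_left h6 (by linarith)

/-- the Lagrangian-based inequality is valid and tight. -/
theorem lagrangian_cut_valid_and_tight (n : ℕ) (hn : 0 < n)
    (φ : (Fin n → ℝ) → ℝ) :
    ∃ U L : Fin n → ℝ,
      -- validity: for every z in the cube and every binary x,
      -- φ(x) ≥ ψ(z) − λ̂(1−x)ᵀ(x−z), where λ̂(w)_i = U_i (1−w_i) + L_i w_i
      (∀ z ∈ Set.Icc (0 : Fin n → ℝ) 1, ∀ x : Fin n → ℝ, IsBin x →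
        psi φ z - ∑ i, (U i * (1 - (1 - x i)) + L i * (1 - x i)) * (x i - z i) ≤ φ x) ∧
      -- for binary z and binary x the inequality can be rewritten with λ̂(z):
      (∀ z : Fin n → ℝ, IsBin z → ∀ x : Fin n → ℝ, IsBin x →
        psi φ z - ∑ i, (U i * (1 - (1 - x i)) + L i * (1 - x i)) * (x i - z i)
          = φ z - ∑ i, (U i * (1 - z i) + L i * z i) * (x i - z i)) ∧
      (∀ z : Fin n → ℝ, IsBin z → ∀ x : Fin n → ℝ, IsBin x →
        φ z - ∑ i, (U i * (1 - z i) + L i * z i) * (x i - z i) ≤ φ x) ∧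
      -- tightness: the right-hand side evaluated at x = z equals φ(z)
      (∀ z : Fin n → ℝ, IsBin z →
        φ z - ∑ i, (U i * (1 - z i) + L i * z i) * (z i - z i) = φ z) := by
  classical
  set M : ℝ := 2 * ∑ v : Fin n → Bool, |φ (fun i => if v i then (1:ℝ) else 0)| with hM
  refine ⟨fun _ => M, fun _ => -M, ?_, ?_, ?_, ?_⟩
  · -- validity
    intro z hz x hx
    have hsum : ∑ i, (M * (1 - (1 - x i)) + (-M) * (1 - x i)) * (x i - z i)
        = M * ∑ i, |x i - z i| := by
      rw [Finset.mul_sum]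
      refine Finset.sum_congr rfl fun i _ => ?_
      rcases hx i with h | h
      · rw [h, zero_sub, abs_neg, abs_of_nonneg (hz.1 i)]; ring
      · have h1i : z i ≤ 1 := hz.2 i
        rw [h, abs_of_nonneg (by linarith : (0:ℝ) ≤ 1 - z i)]; ring
    have hc := core φ z hz x hx
    rw [← hM] at hc
    linarith [hsum, hc]
  · -- rewriting for binary z
    intro z hz x hx
    rw [psi_bin φ z hz]
    congr 1
    refine Finset.sum_congr rfl fun i _ => ?_
    rcases hx i with h1 | h1 <;> rcases hz i with h2 | h2 <;> rw [h1, h2] <;> ring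
  · -- validity at binary z
    intro z hz x hx
    have hzc : z ∈ Set.Icc (0 : Fin n → ℝ) 1 :=
      ⟨fun i => by rcases hz i with h | h <;> simp [h],
       fun i => by rcases hz i with h | h <;> simp [h]⟩
    have h1 : psi φ z - ∑ i, (M * (1 - (1 - x i)) + (-M) * (1 - x i)) * (x i - z i) ≤ φ x := by
      have hsum : ∑ i, (M * (1 - (1 - x i)) + (-M) * (1 - x i)) * (x i - z i)
          = M * ∑ i, |x i - z i| := by
        rw [Finset.mul_sum]
        refine Finset.sum_congr rfl fun i _ => ?_
        rcases hx i with h | h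
        · rw [h, zero_sub, abs_neg, abs_of_nonneg (hzc.1 i)]; ring
        · have h1i : z i ≤ 1 := hzc.2 i
          rw [h, abs_of_nonneg (by linarith : (0:ℝ) ≤ 1 - z i)]; ring
      have hc := core φ z hzc x hx
      rw [← hM] at hc
      linarith [hsum, hc]
    have h2 : psi φ z - ∑ i, (M * (1 - (1 - x i)) + (-M) * (1 - x i)) * (x i - z i)
        = φ z - ∑ i, (M * (1 - z i) + (-M) * z i) * (x i - z i) := by
      rw [psi_bin φ z hz]
      congr 1
      refine Finset.sum_congr rfl fun i _ => ?_
      rcases hx i with h1 | h1 <;> rcases hz i with h2 | h2 <;> rw [h1, h2] <;> ring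
    linarith [h1, h2.symm.le, h2.le]
  · -- tightness
    intro z hz
    simp
end
end
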